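/- Suppose there exists an α-resolvable triple system TS(n,λ) whose blocks partition into s α-parallel classes, each containing t blocks (where an α-parallel class contains every point exactly α times). Then there exists a configuration (3,3) GDD(n,2,6; λt, α²s). -/

import Mathlib

/-!
Pair every block `B` of an `α`-parallel class with every block `C` of the same class, putting
`B` on the first group and `C` on the second. A point lies in `α` blocks of each class and each
of them is paired with all `t` blocks of the class; two points of one group lie together in
`λⱼ` blocks of class `j`, again each paired `t` times, and `∑ⱼ λⱼ = λ`; a cross pair is covered
by `α · α` pairs in each of the `s` classes.
-/

/-- A group divisible design with two groups of size `n` (the points are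
`Fin 2 × Fin n`, the first coordinate indicating the group), blocks of size `k`,
each point lying in `rep` blocks, every pair of distinct points in the same
group lying in exactly `l1` blocks, and every pair of points in different
groups lying in exactly `l2` blocks. -/
structure GDD (n k l1 l2 : ℕ) where
  blocks : Multiset (Finset (Fin 2 × Fin n))
  blockCard : ∀ B ∈ blocks, B.card = k
  rep : ℕ
  pointRep : ∀ x : Fin 2 × Fin n,
    (blocks.filter fun B => x ∈ B).card = rep
  samePairs : ∀ x y : Fin 2 × Fin n, x ≠ y → x.1 = y.1 →
    (blocks.filter fun B => x ∈ B ∧ y ∈ B).card = l1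
  crossPairs : ∀ x y : Fin 2 × Fin n, x.1 ≠ y.1 →
    (blocks.filter fun B => x ∈ B ∧ y ∈ B).card = l2

/-- The design has fixed block configuration `(s,t)`: every block meets one
group in exactly `s` points and the other group in exactly `t` points. -/
def GDD.HasConfig {n k l1 l2 : ℕ} (D : GDD n k l1 l2) (s t : ℕ) : Prop :=
  ∀ B ∈ D.blocks,
    ((B.filter fun p => p.1 = 0).card = s ∧ (B.filter fun p => p.1 = 1).card = t) ∨
    ((B.filter fun p => p.1 = 0).card = t ∧ (B.filter fun p => p.1 = 1).card = s)

/-- A balanced incomplete block design `BIBD(n,k,lam)`: a collection of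
`k`-element subsets (blocks) of an `n`-set such that every pair of distinct
points lies in exactly `lam` blocks. -/
structure BIBD (n k lam : ℕ) where
  blocks : Multiset (Finset (Fin n))
  blockCard : ∀ B ∈ blocks, B.card = k
  pairs : ∀ x y : Fin n, x ≠ y →
    (blocks.filter fun B => x ∈ B ∧ y ∈ B).card = lam

theorem Multiset.countP_product {α β : Type*} (P : α → Prop) (Q : β → Prop)
    [DecidablePred P] [DecidablePred Q] (s : Multiset α) (t : Multiset β) :
    (s ×ˢ t).countP (fun x => P x.1 ∧ Q x.2) = s.countP P * t.countP Q := by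
  induction s using Multiset.induction with
  | empty => simp
  | cons a s ih =>
    rw [Multiset.cons_product, Multiset.countP_add, ih, Multiset.countP_map, Multiset.countP_cons]
    by_cases h : P a <;> simp [h, Multiset.countP_eq_card_filter, add_mul, add_comm]

section PairBlock

variable {n : ℕ}

def pairBlock (B C : Finset (Fin n)) : Finset (Fin 2 × Fin n) := {0} ×ˢ B ∪ {1} ×ˢ C

variable (B C : Finset (Fin n))

@[simp]
theorem mem_pairBlock_zero (u : Fin n) : ((0, u) ∈ pairBlock B C) ↔ u ∈ B := by
  simp [pairBlock]

@[simp]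
theorem mem_pairBlock_one (u : Fin n) : ((1, u) ∈ pairBlock B C) ↔ u ∈ C := by
  simp [pairBlock]

theorem card_filter_fst_eq_zero_pairBlock :
    ((pairBlock B C).filter fun p => p.1 = 0).card = B.card := by
  have : ((pairBlock B C).filter fun p => p.1 = 0) = {0} ×ˢ B := by
    ext ⟨i, u⟩; fin_cases i <;> simp
  simp [this]

theorem card_filter_fst_eq_one_pairBlock :
    ((pairBlock B C).filter fun p => p.1 = 1).card = C.card := by
  have : ((pairBlock B C).filter fun p => p.1 = 1) = {1} ×ˢ C := by
    ext ⟨i, u⟩; fin_cases i <;> simp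
  simp [this]

theorem card_pairBlock : (pairBlock B C).card = B.card + C.card := by
  rw [pairBlock, Finset.card_union_of_disjoint, Finset.card_product, Finset.card_product]
  · simp
  · simp [Finset.disjoint_left]

end PairBlock

section PairedBlocks

variable {n s : ℕ} (classes : Fin s → Multiset (Finset (Fin n)))

def pairedBlocks : Multiset (Finset (Fin 2 × Fin n)) :=
  ∑ j, (classes j ×ˢ classes j).map fun BC => pairBlock BC.1 BC.2

variable {classes}

theorem exists_pairBlock_of_mem_pairedBlocks {X : Finset (Fin 2 × Fin n)}
    (hX : X ∈ pairedBlocks classes) :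
    ∃ j, ∃ B ∈ classes j, ∃ C ∈ classes j, pairBlock B C = X := by
  obtain ⟨j, -, hj⟩ := Multiset.mem_sum.1 hX
  obtain ⟨⟨B, C⟩, hBC, rfl⟩ := Multiset.mem_map.1 hj
  exact ⟨j, B, (Multiset.mem_product.1 hBC).1, C, (Multiset.mem_product.1 hBC).2, rfl⟩

theorem countP_pairedBlocks (R : Finset (Fin 2 × Fin n) → Prop) (P Q : Finset (Fin n) → Prop)
    [DecidablePred R] [DecidablePred P] [DecidablePred Q]
    (hR : ∀ B C, R (pairBlock B C) ↔ P B ∧ Q C) :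
    (pairedBlocks classes).countP R = ∑ j, (classes j).countP P * (classes j).countP Q := by
  rw [pairedBlocks, ← Multiset.coe_countPAddMonoidHom, map_sum]
  refine Finset.sum_congr rfl fun j _ => ?_
  rw [Multiset.coe_countPAddMonoidHom, Multiset.countP_map, ← Multiset.countP_eq_card_filter,
    ← Multiset.countP_product]
  exact Multiset.countP_congr rfl fun BC _ => propext (hR BC.1 BC.2)

theorem countP_mem_pairedBlocks {t a : ℕ} (ht : ∀ j, (classes j).card = t)
    (ha : ∀ j, ∀ x : Fin n, (classes j).countP (x ∈ ·) = a) (x : Fin 2 × Fin n) :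
    (pairedBlocks classes).countP (x ∈ ·) = s * (a * t) := by
  obtain ⟨i, u⟩ := x
  fin_cases i
  · rw [countP_pairedBlocks _ (u ∈ ·) (fun _ => True) (fun B C => by simp)]
    simp [ha, ht]
  · rw [countP_pairedBlocks _ (fun _ => True) (u ∈ ·) (fun B C => by simp)]
    simp [ha, ht, mul_comm]

theorem countP_same_pairedBlocks {t : ℕ} (ht : ∀ j, (classes j).card = t) (i : Fin 2)
    (u v : Fin n) :
    (pairedBlocks classes).countP (fun X => (i, u) ∈ X ∧ (i, v) ∈ X) =
      (∑ j, (classes j).countP fun B => u ∈ B ∧ v ∈ B) * t := by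
  fin_cases i
  · rw [countP_pairedBlocks _ (fun B => u ∈ B ∧ v ∈ B) (fun _ => True) (fun B C => by simp)]
    simp [ht, Finset.sum_mul]
  · rw [countP_pairedBlocks _ (fun _ => True) (fun C => u ∈ C ∧ v ∈ C) (fun B C => by simp)]
    simp [ht, Finset.mul_sum, mul_comm]

theorem countP_cross_pairedBlocks {a : ℕ}
    (ha : ∀ j, ∀ x : Fin n, (classes j).countP (x ∈ ·) = a) {i i' : Fin 2} (hi : i ≠ i')
    (u v : Fin n) :
    (pairedBlocks classes).countP (fun X => (i, u) ∈ X ∧ (i', v) ∈ X) = a ^ 2 * s := by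
  fin_cases i <;> fin_cases i' <;> simp only [ne_eq, not_true_eq_false] at hi
  · rw [countP_pairedBlocks _ (u ∈ ·) (v ∈ ·) (fun B C => by simp)]
    simp [ha, sq, mul_comm]
  · rw [countP_pairedBlocks _ (v ∈ ·) (u ∈ ·) (fun B C => by simp [and_comm])]
    simp [ha, sq, mul_comm]

end PairedBlocks

theorem stmt_11 (n lam s t a : ℕ) (D : BIBD n 3 lam)
    (classes : Fin s → Multiset (Finset (Fin n)))
    (hpart : ∑ j, classes j = D.blocks)
    (ht : ∀ j, (classes j).card = t)
    (ha : ∀ j, ∀ x : Fin n, ((classes j).filter fun B => x ∈ B).card = a) :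
    ∃ G : GDD n 6 (lam * t) (a ^ 2 * s), G.HasConfig 3 3 := by
  have ha' : ∀ j, ∀ x : Fin n, (classes j).countP (x ∈ ·) = a := fun j x => by
    rw [Multiset.countP_eq_card_filter, ha]
  have hcard : ∀ j, ∀ B ∈ classes j, B.card = 3 := fun j B hB =>
    D.blockCard B (hpart ▸ Multiset.mem_sum.2 ⟨j, Finset.mem_univ j, hB⟩)
  have hlam : ∀ u v : Fin n, u ≠ v → ∑ j, (classes j).countP (fun B => u ∈ B ∧ v ∈ B) = lam := by
    intro u v huv
    rw [← D.pairs u v huv, ← Multiset.countP_eq_card_filter, ← hpart,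
      ← Multiset.coe_countPAddMonoidHom, map_sum]
  refine ⟨⟨pairedBlocks classes, ?_, s * (a * t), ?_, ?_, ?_⟩, ?_⟩
  · intro X hX
    obtain ⟨j, B, hB, C, hC, rfl⟩ := exists_pairBlock_of_mem_pairedBlocks hX
    rw [card_pairBlock, hcard j B hB, hcard j C hC]
  · intro x
    rw [← Multiset.countP_eq_card_filter, countP_mem_pairedBlocks ht ha' x]
  · rintro ⟨i, u⟩ ⟨i', v⟩ hne (rfl : i = i')
    rw [← Multiset.countP_eq_card_filter, countP_same_pairedBlocks ht,
      hlam u v fun huv => hne (huv ▸ rfl)]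
  · rintro ⟨i, u⟩ ⟨i', v⟩ hi
    rw [← Multiset.countP_eq_card_filter, countP_cross_pairedBlocks ha' hi]
  · intro X hX
    obtain ⟨j, B, hB, C, hC, rfl⟩ := exists_pairBlock_of_mem_pairedBlocks hX
    left
    rw [card_filter_fst_eq_zero_pairBlock, card_filter_fst_eq_one_pairBlock, hcard j B hB,
      hcard j C hC]
    exact ⟨rfl, rfl⟩
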